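/- Let S be a monoid that is right-cancellative (a*c = b*c implies a = b) and has no nontrivial invertible elements (a*b = 1 implies a = 1 and b = 1). Let Γ ⊆ S be a finite subset containing 1 that generates S as a monoid, is closed under left-divisors (if g ∈ Γ and a left-divides g then a ∈ Γ), and is closed under left-mcm (every left-mcm of two elements of Γ lies in Γ), i.e., Γ is a finite right-Garside family for S. Suppose N̄ : Γ×Γ → Γ×Γ is the greedy head-selection map: for all a, b ∈ Γ, writing N̄(a,b) = (c,d), one has c*d = a*b in S and d is maximal, meaning every g ∈ Γ that right-divides a*b also right-divides d. Then the induced normalisation satisfies Condition (home); in particular, for every length-three word w over Γ, N̄_{121}(w) = N̄_{2121}(w) and this common word is N̄-normal. -/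
import Mathlib


namespace Stmt10

variable {α : Type}

/-- Apply the two-letter map `Nb` at (1-indexed) position `i` of a word. -/
def applyAt (Nb : α → α → α × α) : ℕ → List α → List α
  | 1, x :: y :: s => (Nb x y).1 :: (Nb x y).2 :: s
  | n + 2, x :: s => x :: applyAt Nb (n + 1) s
  | _, w => w

/-- Apply the two-letter map along a finite sequence of positions
(the first position in the list is applied first). -/
def seqApply (Nb : α → α → α × α) (l : List ℕ) (w : List α) : List α :=
  l.foldl (fun w i => applyAt Nb i w) w

/-- A word is `N̄`-normal if `N̄` fixes each of its length-two factors. -/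
def IsNormal (Nb : α → α → α × α) (w : List α) : Prop :=
  ∀ p s : List α, ∀ x y : α, w = p ++ [x, y] ++ s → Nb x y = (x, y)

/-- `g` left-divides `h`. -/
def LeftDvd {S : Type} [Monoid S] (g h : S) : Prop := ∃ k, h = g * k

/-- `g` right-divides `h`. -/
def RightDvd {S : Type} [Monoid S] (g h : S) : Prop := ∃ k, h = k * g

/-- `m` is a left-mcm of `g` and `h`: both right-divide `m`, and no proper right-divisor
of `m` is right-divided by both. -/
def IsLeftMcm {S : Type} [Monoid S] (g h m : S) : Prop :=
  RightDvd g m ∧ RightDvd h m ∧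
    ∀ m₀ : S, RightDvd m₀ m → m₀ ≠ m → ¬(RightDvd g m₀ ∧ RightDvd h m₀)

/-- Theorem `thm-garhome`: if `S` is a right-cancellative monoid with
no nontrivial invertible element and `Γ` is a finite right-Garside family for `S`, then
the greedy normalisation induced by `Γ` satisfies Condition (home): for every
length-three word `w` over `Γ`, `N̄_{121}(w) = N̄_{2121}(w)` and this word is normal. -/
theorem garside_family_gives_home
    {S : Type} [Monoid S]
    (hrc : ∀ a b c : S, a * c = b * c → a = b)
    (hinv : ∀ a b : S, a * b = 1 → a = 1 ∧ b = 1)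
    (Γ : Set S) (hfin : Γ.Finite) (hone : (1 : S) ∈ Γ)
    (hgen : Submonoid.closure Γ = ⊤)
    (hld : ∀ g ∈ Γ, ∀ a : S, LeftDvd a g → a ∈ Γ)
    (hmcm : ∀ g ∈ Γ, ∀ h ∈ Γ, ∀ m : S, IsLeftMcm g h m → m ∈ Γ)
    (Nb : Γ → Γ → Γ × Γ)
    (hmul : ∀ a b : Γ, ((Nb a b).1 : S) * ((Nb a b).2 : S) = (a : S) * (b : S))
    (hmax : ∀ a b : Γ, ∀ g : Γ,
      RightDvd (g : S) ((a : S) * (b : S)) → RightDvd (g : S) ((Nb a b).2 : S)) :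
    ∀ w : List Γ, w.length = 3 →
      seqApply Nb [1, 2, 1] w = seqApply Nb [2, 1, 2, 1] w ∧
      IsNormal Nb (seqApply Nb [1, 2, 1] w) := by
  -- generalities about right-divisibility
  have rd_trans : ∀ x y z : S, RightDvd x y → RightDvd y z → RightDvd x z := by
    rintro x y z ⟨k, rfl⟩ ⟨l, rfl⟩
    exact ⟨l * k, (mul_assoc l k x).symm⟩
  have antisym : ∀ x y : S, RightDvd x y → RightDvd y x → x = y := by
    rintro x y ⟨k, hk⟩ ⟨l, hl⟩
    have h1 : (1 : S) * x = (l * k) * x := by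
      rw [one_mul, mul_assoc, ← hk, ← hl]
    have h2 := hrc 1 (l * k) x h1
    obtain ⟨hl1, hk1⟩ := hinv l k h2.symm
    rw [hk, hk1, one_mul]
  have prodext : ∀ p q : Γ × Γ, p.1 = q.1 → p.2 = q.2 → p = q := by
    rintro ⟨p1, p2⟩ ⟨q1, q2⟩ h1 h2
    cases h1; cases h2; rfl
  -- the key "trick" lemma
  have htrick : ∀ X z α β : Γ, RightDvd (z : S) (X : S) →
      RightDvd (X : S) ((α : S) * (β : S) * (z : S)) →
      RightDvd (X : S) (((Nb (Nb α β).2 z).2 : S)) := by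
    intro X z α β hzX hXe
    obtain ⟨k, hk⟩ := hzX
    obtain ⟨q, hq⟩ := hXe
    have hkΓ : k ∈ Γ := hld (X : S) X.2 k ⟨(z : S), hk⟩
    have h2 : (α : S) * (β : S) = q * k := by
      apply hrc _ _ (z : S)
      rw [hq, hk, mul_assoc]
    obtain ⟨u, hu⟩ := hmax α β ⟨k, hkΓ⟩ ⟨q, h2⟩
    exact hmax (Nb α β).2 z X ⟨u, by rw [hu, hk, mul_assoc]⟩
  intro w hw
  obtain ⟨a, b, c, rfl⟩ : ∃ a b c : Γ, w = [a, b, c] := by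
    rcases w with _ | ⟨a, w⟩
    · simp at hw
    rcases w with _ | ⟨b, w⟩
    · simp at hw
    rcases w with _ | ⟨c, w⟩
    · simp at hw
    rcases w with _ | ⟨d, w⟩
    · exact ⟨a, b, c, rfl⟩
    · simp at hw
  -- names for the letters occurring in the two runs
  set a1 : Γ := (Nb a b).1 with ha1
  set b1 : Γ := (Nb a b).2 with hb1
  set b2 : Γ := (Nb b1 c).1 with hb2
  set c2 : Γ := (Nb b1 c).2 with hc2d
  set a3 : Γ := (Nb a1 b2).1 with ha3
  set b3 : Γ := (Nb a1 b2).2 with hb3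
  set B : Γ := (Nb b c).1 with hBd
  set C : Γ := (Nb b c).2 with hCd
  set A : Γ := (Nb a B).1 with hAd
  set B' : Γ := (Nb a B).2 with hB'd
  set B2 : Γ := (Nb B' C).1 with hB2d
  set C' : Γ := (Nb B' C).2 with hC'd
  set P : Γ := (Nb A B2).1 with hPd
  set Q : Γ := (Nb A B2).2 with hQd
  have m1 : (a1 : S) * b1 = (a : S) * b := hmul a b
  have m2 : (b2 : S) * c2 = (b1 : S) * c := hmul b1 c
  have m3 : (a3 : S) * b3 = (a1 : S) * b2 := hmul a1 b2
  have m4 : (B : S) * C = (b : S) * c := hmul b c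
  have m5 : (A : S) * B' = (a : S) * B := hmul a B
  have m6 : (B2 : S) * C' = (B' : S) * C := hmul B' C
  have m7 : (P : S) * Q = (A : S) * B2 := hmul A B2
  -- basic divisibility facts
  have hbb1 : RightDvd (b : S) (b1 : S) := hmax a b b ⟨a, rfl⟩
  have hb2b3 : RightDvd (b2 : S) (b3 : S) := hmax a1 b2 b2 ⟨a1, rfl⟩
  have hcC : RightDvd (c : S) (C : S) := hmax b c c ⟨b, rfl⟩
  have hCC' : RightDvd (C : S) (C' : S) := hmax B' C C ⟨B', rfl⟩
  have hcC' : RightDvd (c : S) (C' : S) := rd_trans _ _ _ hcC hCC'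
  have hc2E : RightDvd (c2 : S) ((a : S) * b * c) := by
    refine rd_trans _ ((b1 : S) * c) _ ⟨b2, m2.symm⟩ ⟨a1, ?_⟩
    rw [← m1, mul_assoc]
  have hC'E : RightDvd (C' : S) ((a : S) * b * c) := by
    refine rd_trans _ ((B' : S) * C) _ ⟨B2, m6.symm⟩ ⟨A, ?_⟩
    rw [← mul_assoc, m5, mul_assoc, mul_assoc, m4]
  have hCc2 : RightDvd (C : S) (c2 : S) := by
    obtain ⟨k, hk⟩ := hbb1
    refine hmax b1 c C (rd_trans _ ((b : S) * c) _ ⟨B, m4.symm⟩ ⟨k, ?_⟩)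
    rw [hk, mul_assoc]
  have hC'c2 : RightDvd (C' : S) (c2 : S) := htrick C' c a b hcC' hC'E
  have hc2aBC : RightDvd (c2 : S) ((a : S) * B * C) := by
    obtain ⟨q, hq⟩ := hc2E
    exact ⟨q, by rw [mul_assoc, m4, ← mul_assoc, hq]⟩
  have hc2C' : RightDvd (c2 : S) (C' : S) := htrick c2 C a B hCc2 hc2aBC
  have hc2C'eq : c2 = C' := Subtype.ext (antisym _ _ hc2C' hC'c2)
  -- the domino: (b3, c2) is Nb-fixed
  obtain ⟨v, hv⟩ := hb2b3
  have hcb3c2 : RightDvd (c : S) ((b3 : S) * c2) :=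
    ⟨v * b1, by rw [hv, mul_assoc, m2, ← mul_assoc]⟩
  have hcc3 : RightDvd (c : S) ((Nb b3 c2).2 : S) := hmax b3 c2 c hcb3c2
  have hc3E : RightDvd ((Nb b3 c2).2 : S) ((a : S) * b * c) := by
    refine rd_trans _ ((b3 : S) * c2) _ ⟨(Nb b3 c2).1, (hmul b3 c2).symm⟩ ⟨a3, ?_⟩
    rw [← m1, mul_assoc, ← m2, ← mul_assoc, ← m3, mul_assoc]
  have hc3c2' : RightDvd ((Nb b3 c2).2 : S) (c2 : S) := htrick (Nb b3 c2).2 c a b hcc3 hc3E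
  have hc2c3 : RightDvd (c2 : S) ((Nb b3 c2).2 : S) := hmax b3 c2 c2 ⟨b3, rfl⟩
  have hfix23snd : (Nb b3 c2).2 = c2 := Subtype.ext (antisym _ _ hc3c2' hc2c3)
  have hm23 := hmul b3 c2
  rw [hfix23snd] at hm23
  have hfix23fst : (Nb b3 c2).1 = b3 := Subtype.ext (hrc _ _ (c2 : S) hm23)
  have hfix23 : Nb b3 c2 = (b3, c2) := prodext _ _ hfix23fst hfix23snd
  -- idempotence: (a3, b3) is Nb-fixed
  have h12a : RightDvd ((Nb a3 b3).2 : S) (b3 : S) := by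
    refine hmax a1 b2 (Nb a3 b3).2 ⟨(Nb a3 b3).1, ?_⟩
    rw [← m3, ← hmul a3 b3]
  have h12b : RightDvd ((b3 : S)) ((Nb a3 b3).2 : S) := hmax a3 b3 b3 ⟨a3, rfl⟩
  have hfix12snd : (Nb a3 b3).2 = b3 := Subtype.ext (antisym _ _ h12a h12b)
  have hm12 := hmul a3 b3
  rw [hfix12snd] at hm12
  have hfix12fst : (Nb a3 b3).1 = a3 := Subtype.ext (hrc _ _ (b3 : S) hm12)
  have hfix12 : Nb a3 b3 = (a3, b3) := prodext _ _ hfix12fst hfix12snd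
  -- comparing the two runs: middle and first letters
  have hABeq : (A : S) * B2 = (a1 : S) * b2 := by
    apply hrc _ _ (c2 : S)
    calc (A : S) * B2 * c2
        = A * B2 * C' := by rw [hc2C'eq]
      _ = A * (B2 * C') := mul_assoc _ _ _
      _ = A * (B' * C) := by rw [m6]
      _ = A * B' * C := (mul_assoc _ _ _).symm
      _ = a * B * C := by rw [m5]
      _ = a * (B * C) := mul_assoc _ _ _
      _ = a * (b * c) := by rw [m4]
      _ = a * b * c := (mul_assoc _ _ _).symm
      _ = a1 * b1 * c := by rw [m1]
      _ = a1 * (b1 * c) := mul_assoc _ _ _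
      _ = a1 * (b2 * c2) := by rw [m2]
      _ = a1 * b2 * c2 := (mul_assoc _ _ _).symm
  have hQb3 : Q = b3 := by
    have r1 : RightDvd (Q : S) (b3 : S) := hmax a1 b2 Q ⟨P, by rw [m7, hABeq]⟩
    have r2 : RightDvd (b3 : S) (Q : S) := hmax A B2 b3 ⟨a3, by rw [hABeq, ← m3]⟩
    exact Subtype.ext (antisym _ _ r1 r2)
  have hPa3 : P = a3 := by
    have e : (P : S) * Q = (a3 : S) * Q := by
      rw [m7, hABeq, hQb3, m3]
    exact Subtype.ext (hrc _ _ _ e)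
  -- computing the two runs
  have e121 : seqApply Nb [1, 2, 1] [a, b, c] = [a3, b3, c2] := rfl
  have e2121 : seqApply Nb [2, 1, 2, 1] [a, b, c] = [P, Q, C'] := rfl
  constructor
  · rw [e121, e2121, hPa3, hQb3, hc2C'eq]
  · rw [e121]
    intro p s x y h
    rcases p with _ | ⟨p1, p⟩
    · simp only [List.nil_append, List.cons_append] at h
      injection h with h1 h
      injection h with h2 h
      subst h1; subst h2
      exact hfix12
    · rcases p with _ | ⟨p2, p⟩
      · simp only [List.cons_append, List.nil_append] at h
        injection h with h1 h
        injection h with h2 h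
        injection h with h3 h
        subst h2; subst h3
        exact hfix23
      · have hl := congrArg List.length h
        simp [List.length_append] at hl
        omega

end Stmt10
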